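/- arXiv:1407.5347 — 2 statements merged into one kernel-verified Lean document; each statement's English description precedes it below -/
import Mathlib

section
/- Let d ∈ ℕ with d ≥ 1 and let p ≥ 2 be a real number. There exists a constant K > 0, depending only on p, such that for all y₁, y₂ ∈ ℝ^d: ‖y₁ + y₂‖^p − ‖y₁‖^p − p ‖y₁‖^{p−2} ⟨y₁, y₂⟩ ≤ K ( ‖y₁‖^{p−2} ‖y₂‖² + ‖y₂‖^p ). -/
/-!
With `a = ‖y₁‖`, `b = ‖y₂‖` and `t = ⟪y₁, y₂⟫`, the left-hand side is
`(a² + 2t + b²)^(p/2) - a^p - p a^(p-2) t`, a convex function of `t` on `[-ab, ab]`.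
It is therefore bounded by its values at `t = ±ab`, which are the one-dimensional quantities
`(a + b)^p - a^p - p a^(p-1) b` and `|a - b|^p - a^p + p a^(p-1) b`. Both are estimated by
applying twice the tangent-line inequality `x^q - y^q ≤ q x^(q-1) (x - y)` of the convex
function `x ↦ x^q` (Bernoulli's inequality), once with `q = p` and once with `q = p - 1`.
-/

open Real Set

lemma sq_rpow_div_two {x : ℝ} (hx : 0 ≤ x) (p : ℝ) : (x ^ 2) ^ (p / 2) = x ^ p := by
  rw [← rpow_natCast_mul hx]
  norm_num [mul_div_cancel₀]

lemma rpow_sub_rpow_le_mul_sub {q x y : ℝ} (hq : 1 ≤ q) (hx : 0 ≤ x) (hy : 0 ≤ y) :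
    x ^ q - y ^ q ≤ q * x ^ (q - 1) * (x - y) := by
  rcases hx.eq_or_lt with rfl | hx
  · rcases hq.eq_or_lt with rfl | hq
    · simp
    · rw [zero_rpow (by linarith), zero_rpow (by linarith)]
      have : 0 ≤ y ^ q := by positivity
      simpa using this
  · have bernoulli := one_add_mul_self_le_rpow_one_add (s := y / x - 1)
      (by linarith [div_nonneg hy hx.le]) hq
    rw [add_sub_cancel, div_rpow hy hx.le, le_div_iff₀ (rpow_pos_of_pos hx q)] at bernoulli
    rw [rpow_sub_one hx.ne']
    have expand : (1 + q * (y / x - 1)) * x ^ q = x ^ q - q * (x ^ q / x) * (x - y) := by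
      field_simp
      ring
    linarith

lemma add_rpow_le_two_rpow_mul_add_rpow {r a b : ℝ} (hr : 0 ≤ r) (ha : 0 ≤ a) (hb : 0 ≤ b) :
    (a + b) ^ r ≤ 2 ^ r * (a ^ r + b ^ r) := by
  have hmax : max a b ^ r ≤ a ^ r + b ^ r := by
    rcases le_total a b with h | h
    · simp only [max_eq_right h, le_add_iff_nonneg_left]; positivity
    · simp only [max_eq_left h, le_add_iff_nonneg_right]; positivity
  calc (a + b) ^ r ≤ (2 * max a b) ^ r := by
        gcongr
        linarith [le_max_left a b, le_max_right a b]
    _ = 2 ^ r * max a b ^ r := mul_rpow zero_le_two (le_max_of_le_left ha)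
    _ ≤ 2 ^ r * (a ^ r + b ^ r) := by gcongr

lemma add_rpow_sub_rpow_sub_le {p a b : ℝ} (hp : 2 ≤ p) (ha : 0 ≤ a) (hb : 0 ≤ b) :
    (a + b) ^ p - a ^ p - p * a ^ (p - 1) * b ≤
      p * (p - 1) * 2 ^ (p - 2) * (a ^ (p - 2) * b ^ 2 + b ^ p) := by
  have hab : 0 ≤ a + b := by linarith
  have tangent := rpow_sub_rpow_le_mul_sub (by linarith) hab ha (q := p)
  have tangent' := rpow_sub_rpow_le_mul_sub (by linarith) hab ha (q := p - 1)
  rw [add_sub_cancel_left] at tangent tangent'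
  rw [show p - 1 - 1 = p - 2 by ring] at tangent'
  have hb2 : b ^ (p - 2) * b ^ 2 = b ^ p := by
    rw [← rpow_natCast, ← rpow_add' hb (by norm_num; linarith)]
    norm_num
  calc (a + b) ^ p - a ^ p - p * a ^ (p - 1) * b
      ≤ p * b * ((a + b) ^ (p - 1) - a ^ (p - 1)) := by linarith
    _ ≤ p * b * ((p - 1) * (a + b) ^ (p - 2) * b) := by gcongr
    _ = p * (p - 1) * (a + b) ^ (p - 2) * b ^ 2 := by ring
    _ ≤ p * (p - 1) * (2 ^ (p - 2) * (a ^ (p - 2) + b ^ (p - 2))) * b ^ 2 := by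
        have : 0 ≤ p - 1 := by linarith
        gcongr
        exact add_rpow_le_two_rpow_mul_add_rpow (by linarith) ha hb
    _ = p * (p - 1) * 2 ^ (p - 2) * (a ^ (p - 2) * b ^ 2 + b ^ p) := by rw [← hb2]; ring

lemma abs_sub_rpow_sub_rpow_add_le {p a b : ℝ} (hp : 2 ≤ p) (ha : 0 ≤ a) (hb : 0 ≤ b) :
    |a - b| ^ p - a ^ p + p * a ^ (p - 1) * b ≤
      p * (p - 1) * a ^ (p - 2) * b ^ 2 + (p + 1) * b ^ p := by
  rcases le_total b a with hba | hab
  · have hsub : 0 ≤ a - b := by linarith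
    have tangent := rpow_sub_rpow_le_mul_sub (by linarith) hsub ha (q := p)
    have tangent' := rpow_sub_rpow_le_mul_sub (by linarith) ha hsub (q := p - 1)
    rw [sub_sub_cancel] at tangent'
    rw [show p - 1 - 1 = p - 2 by ring] at tangent'
    rw [abs_of_nonneg hsub]
    have : 0 ≤ b ^ p := by positivity
    calc (a - b) ^ p - a ^ p + p * a ^ (p - 1) * b
        ≤ p * b * (a ^ (p - 1) - (a - b) ^ (p - 1)) := by linarith
      _ ≤ p * b * ((p - 1) * a ^ (p - 2) * b) := by gcongr
      _ ≤ p * (p - 1) * a ^ (p - 2) * b ^ 2 + (p + 1) * b ^ p := by nlinarith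
  · have h1 : |a - b| ^ p ≤ b ^ p := by
      gcongr
      rw [abs_sub_comm, abs_of_nonneg (by linarith)]
      linarith
    have h2 : a ^ (p - 1) * b ≤ b ^ p :=
      calc a ^ (p - 1) * b ≤ b ^ (p - 1) * b := by gcongr; linarith
        _ = b ^ p := by rw [← rpow_add_one' hb (by linarith), sub_add_cancel]
    have : 0 ≤ p * (p - 1) * a ^ (p - 2) * b ^ 2 := by
      have : 0 ≤ p - 1 := by linarith
      positivity
    have : 0 ≤ a ^ p := by positivity
    nlinarith

lemma convexOn_rpow_sq_add_sub_mul {p : ℝ} (hp : 2 ≤ p) (a b c : ℝ) :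
    ConvexOn ℝ (Ici (-(a * b)))
      (fun t ↦ (a ^ 2 + 2 * t + b ^ 2) ^ (p / 2) - c * t) := by
  refine ⟨convex_Ici _, fun s hs t ht μ ν hμ hν hμν ↦ ?_⟩
  have base : ∀ u ∈ Ici (-(a * b)), a ^ 2 + 2 * u + b ^ 2 ∈ Ici 0 := by
    intro u hu
    rw [mem_Ici]
    nlinarith [sq_nonneg (a - b), mem_Ici.1 hu]
  have key := (convexOn_rpow (by linarith : 1 ≤ p / 2)).2 (base s hs) (base t ht) hμ hν hμν
  have harg : a ^ 2 + 2 * (μ * s + ν * t) + b ^ 2 =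
      μ * (a ^ 2 + 2 * s + b ^ 2) + ν * (a ^ 2 + 2 * t + b ^ 2) := by
    linear_combination (-(a ^ 2 + b ^ 2)) * hμν
  simp only [smul_eq_mul] at key ⊢
  rw [harg]
  linarith

lemma rpow_sq_add_sub_le {p a b t : ℝ} (hp : 2 ≤ p) (ha : 0 ≤ a) (hb : 0 ≤ b)
    (ht : |t| ≤ a * b) :
    (a ^ 2 + 2 * t + b ^ 2) ^ (p / 2) - a ^ p - p * a ^ (p - 2) * t ≤
      (p * (p - 1) * 2 ^ (p - 2) + p + 1) * (a ^ (p - 2) * b ^ 2 + b ^ p) := by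
  have hab : -(a * b) ≤ a * b := by nlinarith [mul_nonneg ha hb]
  have hseg : t ∈ segment ℝ (-(a * b)) (a * b) := by
    rw [segment_eq_Icc hab]
    exact abs_le.1 ht
  have hmax := (convexOn_rpow_sq_add_sub_mul hp a b (p * a ^ (p - 2))).le_on_segment
    self_mem_Ici (mem_Ici.2 hab) hseg
  have hderiv : p * a ^ (p - 2) * (a * b) = p * a ^ (p - 1) * b := by
    rw [show p - 1 = p - 2 + 1 by ring, rpow_add_one' ha (by linarith)]
    ring
  have hplus : (a ^ 2 + 2 * (a * b) + b ^ 2) ^ (p / 2) = (a + b) ^ p := by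
    rw [← sq_rpow_div_two (by linarith : 0 ≤ a + b)]
    ring_nf
  have hminus : (a ^ 2 + 2 * -(a * b) + b ^ 2) ^ (p / 2) = |a - b| ^ p := by
    rw [← sq_rpow_div_two (abs_nonneg (a - b)), sq_abs]
    ring_nf
  beta_reduce at hmax
  rw [hplus, hminus, mul_neg, sub_neg_eq_add, hderiv] at hmax
  have h2 : 1 ≤ (2 : ℝ) ^ (p - 2) := one_le_rpow one_le_two (by linarith)
  have hp1 : 0 ≤ p * (p - 1) := by nlinarith
  have hR₁ : 0 ≤ a ^ (p - 2) * b ^ 2 := by positivity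
  have hR₂ : 0 ≤ b ^ p := by positivity
  have hK_plus : p * (p - 1) * 2 ^ (p - 2) * (a ^ (p - 2) * b ^ 2 + b ^ p) ≤
      (p * (p - 1) * 2 ^ (p - 2) + p + 1) * (a ^ (p - 2) * b ^ 2 + b ^ p) := by
    nlinarith
  have hK_minus : p * (p - 1) * a ^ (p - 2) * b ^ 2 + (p + 1) * b ^ p ≤
      (p * (p - 1) * 2 ^ (p - 2) + p + 1) * (a ^ (p - 2) * b ^ 2 + b ^ p) := by
    nlinarith [mul_le_mul_of_nonneg_left h2 hp1]
  have hplus_le := add_rpow_sub_rpow_sub_le hp ha hb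
  have hminus_le := abs_sub_rpow_sub_rpow_add_le hp ha hb
  rcases le_max_iff.1 hmax with h | h <;> linarith

theorem norm_add_rpow_sub_le {E : Type*} [NormedAddCommGroup E] [InnerProductSpace ℝ E] {p : ℝ}
    (hp : 2 ≤ p) (y₁ y₂ : E) :
    ‖y₁ + y₂‖ ^ p - ‖y₁‖ ^ p - p * ‖y₁‖ ^ (p - 2) * inner ℝ y₁ y₂ ≤
      (p * (p - 1) * 2 ^ (p - 2) + p + 1) * (‖y₁‖ ^ (p - 2) * ‖y₂‖ ^ 2 + ‖y₂‖ ^ p) := by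
  rw [← sq_rpow_div_two (norm_nonneg _), norm_add_sq_real]
  exact rpow_sq_add_sub_le hp (norm_nonneg _) (norm_nonneg _) (abs_real_inner_le_norm y₁ y₂)

theorem stmt_10_general (d : ℕ) (p : ℝ) (hp : 2 ≤ p) :
    ∃ K > 0, ∀ y₁ y₂ : EuclideanSpace ℝ (Fin d),
      ‖y₁ + y₂‖ ^ p - ‖y₁‖ ^ p - p * ‖y₁‖ ^ (p - 2) * (inner ℝ y₁ y₂ : ℝ) ≤
        K * (‖y₁‖ ^ (p - 2) * ‖y₂‖ ^ 2 + ‖y₂‖ ^ p) := by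
  have : 0 < p - 1 := by linarith
  exact ⟨_, by positivity, norm_add_rpow_sub_le hp⟩

/-- Taylor-type estimate for the map `y ↦ ‖y‖^p`, `p ≥ 2`:
`‖y₁+y₂‖^p − ‖y₁‖^p − p‖y₁‖^{p−2}⟨y₁,y₂⟩ ≤ K(‖y₁‖^{p−2}‖y₂‖² + ‖y₂‖^p)`. -/
theorem stmt_10 (d : ℕ) (hd : 1 ≤ d) (p : ℝ) (hp : 2 ≤ p) :
    ∃ K > 0, ∀ y₁ y₂ : EuclideanSpace ℝ (Fin d),
      ‖y₁ + y₂‖ ^ p - ‖y₁‖ ^ p - p * ‖y₁‖ ^ (p - 2) * (inner ℝ y₁ y₂ : ℝ) ≤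
        K * (‖y₁‖ ^ (p - 2) * ‖y₂‖ ^ 2 + ‖y₂‖ ^ p) :=
  stmt_10_general d p hp
end

section
/- Let d ∈ ℕ with d ≥ 1 and let p ≥ 2 be a real number. There exists a constant K > 0, depending only on p, such that for all y₁, y₂ ∈ ℝ^d: ‖y₁ + y₂‖^p − ‖y₁‖^p − p ‖y₁‖^{p−2} ⟨y₁, y₂⟩ ≤ K ∫₀¹ ‖y₁ + q y₂‖^{p−2} ‖y₂‖² dq, where the integral is the Lebesgue integral in q over [0, 1]. -/
open Real Set MeasureTheory intervalIntegral Asymptotics Topology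
open scoped RealInnerProductSpace

/-! Along the line `a t = x + t • v`, the function `‖a t‖ ^ p` has derivative
`h t = p ⟪‖a t‖ ^ (p - 2) • a t, v⟫`. For `p ≥ 2` the map `y ↦ ‖y‖ ^ (p - 2) • y` is differentiable
everywhere (at `0` because it is `o(‖y‖)` there), and by Cauchy–Schwarz its derivative at `y` has
quadratic form at most `(p - 1) ‖y‖ ^ (p - 2) ‖v‖ ^ 2`. So `h t - h 0 ≤ ∫₀¹ φ` with the nonnegative
`φ t = p (p - 1) ‖a t‖ ^ (p - 2) ‖v‖ ^ 2`, and integrating over `t ∈ [0, 1]` gives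
`K = p (p - 1)`. -/

theorem sub_sub_mul_le_mul_integral_of_hasDerivAt {g h h' φ : ℝ → ℝ} {a b : ℝ} (hab : a ≤ b)
    (hg : ∀ t ∈ Icc a b, HasDerivAt g (h t) t) (hh : ∀ t ∈ Icc a b, HasDerivAt h (h' t) t)
    (hφ : IntegrableOn φ (Icc a b)) (hh'φ : ∀ t ∈ Icc a b, h' t ≤ φ t)
    (hφ_nonneg : ∀ t ∈ Icc a b, 0 ≤ φ t) :
    g b - g a - (b - a) * h a ≤ (b - a) * ∫ t in a..b, φ t := by
  have hh_cont : ContinuousOn h (Icc a b) := fun t ht => (hh t ht).continuousAt.continuousWithinAt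
  have h_sub_le : ∀ t ∈ Icc a b, h t - h a ≤ ∫ s in a..b, φ s := by
    intro t ht
    have hIcc : Icc a t ⊆ Icc a b := Icc_subset_Icc_right ht.2
    calc h t - h a ≤ ∫ s in a..t, φ s :=
          sub_le_integral_of_hasDeriv_right_of_le ht.1 (hh_cont.mono hIcc)
            (fun s hs => (hh s (hIcc (Ioo_subset_Icc_self hs))).hasDerivWithinAt)
            (hφ.mono_set hIcc) (fun s hs => hh'φ s (hIcc (Ioo_subset_Icc_self hs)))
      _ ≤ ∫ s in a..b, φ s :=
          integral_mono_interval le_rfl ht.1 ht.2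
            ((ae_restrict_mem measurableSet_Ioc).mono
              fun s hs => hφ_nonneg s (Ioc_subset_Icc_self hs))
            ((intervalIntegrable_iff_integrableOn_Icc_of_le hab).2 hφ)
  have hh_int : IntervalIntegrable h volume a b :=
    hh_cont.intervalIntegrable_of_Icc hab
  calc g b - g a - (b - a) * h a = ∫ t in a..b, (h t - h a) := by
        rw [integral_sub hh_int intervalIntegrable_const, intervalIntegral.integral_const,
          smul_eq_mul, integral_eq_sub_of_hasDerivAt (by rwa [uIcc_of_le hab]) hh_int]
    _ ≤ ∫ _ in a..b, ∫ s in a..b, φ s :=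
        integral_mono_on hab (hh_int.sub intervalIntegrable_const) intervalIntegrable_const h_sub_le
    _ = (b - a) * ∫ t in a..b, φ t := by rw [intervalIntegral.integral_const, smul_eq_mul]

section NormRpowSmulSelf

variable {E : Type*} [NormedAddCommGroup E] [InnerProductSpace ℝ E] {q : ℝ}

theorem hasFDerivAt_norm_rpow_smul_self_zero (hq : 0 < q) :
    HasFDerivAt (fun y : E => ‖y‖ ^ q • y) (0 : E →L[ℝ] E) 0 := by
  refine .of_isLittleO ?_
  have hnorm : (fun y : E => ‖y‖ ^ q) =o[𝓝 0] (fun _ => (1 : ℝ)) := by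
    rw [isLittleO_one_iff]
    simpa [hq.ne'] using (continuous_norm.rpow_const fun _ => .inr hq.le).tendsto (0 : E)
  simpa using hnorm.smul_isBigO (isBigO_refl (fun y : E => y) _)

theorem hasFDerivAt_norm_rpow_smul_self_of_ne_zero {x : E} (hx : x ≠ 0) :
    HasFDerivAt (fun y : E => ‖y‖ ^ q • y)
      (‖x‖ ^ q • ContinuousLinearMap.id ℝ E + ((q * ‖x‖ ^ (q - 2)) • innerSL ℝ x).smulRight x)
      x := by
  have hpow : HasFDerivAt (fun y : E => ‖y‖ ^ q) ((q * ‖x‖ ^ (q - 2)) • innerSL ℝ x) x := by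
    convert ((hasStrictFDerivAt_norm_sq x).rpow_const (p := q / 2) (.inl (by simpa))).hasFDerivAt
      using 1
    · ext y
      rw [← rpow_natCast, ← rpow_mul (norm_nonneg y)]
      congr 1
      push_cast
      ring
    · rw [← rpow_natCast, ← rpow_mul (norm_nonneg x), ← Nat.cast_smul_eq_nsmul ℝ, smul_smul]
      congr 1
      push_cast
      ring_nf
  exact hpow.smul (hasFDerivAt_id x)

theorem exists_hasFDerivAt_norm_rpow_smul_self (hq : 0 ≤ q) (x : E) :
    ∃ L : E →L[ℝ] E, HasFDerivAt (fun y : E => ‖y‖ ^ q • y) L x ∧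
      ∀ v, ⟪L v, v⟫ ≤ (q + 1) * ‖x‖ ^ q * ‖v‖ ^ 2 := by
  rcases hq.eq_or_lt with rfl | hq
  · refine ⟨ContinuousLinearMap.id ℝ E, ?_, fun v => by simp⟩
    simp only [rpow_zero, one_smul]
    exact hasFDerivAt_id x
  rcases eq_or_ne x 0 with rfl | hx
  · exact ⟨0, hasFDerivAt_norm_rpow_smul_self_zero hq, fun v => by simp [zero_rpow hq.ne']⟩
  refine ⟨_, hasFDerivAt_norm_rpow_smul_self_of_ne_zero hx, fun v => ?_⟩
  have hcs : ⟪x, v⟫ * ⟪x, v⟫ ≤ ‖x‖ ^ 2 * ‖v‖ ^ 2 := by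
    rw [← mul_pow, ← abs_mul_abs_self, sq]
    exact mul_self_le_mul_self (abs_nonneg _) (abs_real_inner_le_norm x v)
  have hx2 : ‖x‖ ^ (q - 2) * ‖x‖ ^ 2 = ‖x‖ ^ q := by
    rw [← rpow_natCast, ← rpow_add (norm_pos_iff.2 hx)]; norm_num
  calc _ = ‖x‖ ^ q * ‖v‖ ^ 2 + q * ‖x‖ ^ (q - 2) * (⟪x, v⟫ * ⟪x, v⟫) := by
        simp [inner_add_left, real_inner_smul_left]; ring
    _ ≤ ‖x‖ ^ q * ‖v‖ ^ 2 + q * ‖x‖ ^ (q - 2) * (‖x‖ ^ 2 * ‖v‖ ^ 2) := by gcongr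
    _ = (q + 1) * ‖x‖ ^ q * ‖v‖ ^ 2 := by rw [← hx2]; ring

end NormRpowSmulSelf

theorem norm_add_rpow_sub_le_integral {E : Type*} [NormedAddCommGroup E] [InnerProductSpace ℝ E]
    {p : ℝ} (hp : 2 ≤ p) (x v : E) :
    ‖x + v‖ ^ p - ‖x‖ ^ p - p * ‖x‖ ^ (p - 2) * ⟪x, v⟫ ≤
      p * (p - 1) * ∫ t in (0 : ℝ)..1, ‖x + t • v‖ ^ (p - 2) * ‖v‖ ^ 2 := by
  set a : ℝ → E := fun t => x + t • v
  have ha : ∀ t, HasDerivAt a v t := fun t => by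
    simpa [a] using ((hasDerivAt_id t).smul_const v).const_add x
  have hg : ∀ t, HasDerivAt (fun t => ‖a t‖ ^ p) (p * ⟪‖a t‖ ^ (p - 2) • a t, v⟫) t := fun t => by
    refine ((hasFDerivAt_norm_rpow (a t) (by linarith)).comp_hasDerivAt t (ha t)).congr_deriv ?_
    simp [real_inner_smul_left, mul_assoc]
  have hh : ∀ t, ∃ D, HasDerivAt (fun t => p * ⟪‖a t‖ ^ (p - 2) • a t, v⟫) D t ∧
      D ≤ p * (p - 1) * (‖a t‖ ^ (p - 2) * ‖v‖ ^ 2) := fun t => by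
    obtain ⟨L, hL, hLv⟩ := exists_hasFDerivAt_norm_rpow_smul_self (sub_nonneg.2 hp) (a t)
    refine ⟨p * ⟪L v, v⟫, ?_, ?_⟩
    · simpa using (((hL.comp_hasDerivAt t (ha t)).inner ℝ (hasDerivAt_const t v)).const_mul p)
    · calc p * ⟪L v, v⟫ ≤ p * ((p - 2 + 1) * ‖a t‖ ^ (p - 2) * ‖v‖ ^ 2) :=
            mul_le_mul_of_nonneg_left (hLv v) (by linarith)
        _ = p * (p - 1) * (‖a t‖ ^ (p - 2) * ‖v‖ ^ 2) := by ring
  choose h' hh' hh'_le using hh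
  have hφ : Continuous fun t => p * (p - 1) * (‖a t‖ ^ (p - 2) * ‖v‖ ^ 2) := by
    fun_prop (disch := linarith)
  have htaylor := sub_sub_mul_le_mul_integral_of_hasDerivAt zero_le_one (fun t _ => hg t)
    (fun t _ => hh' t) hφ.integrableOn_Icc (fun t _ => hh'_le t)
    (fun t _ => mul_nonneg (by nlinarith) (by positivity))
  simpa [a, real_inner_smul_left, intervalIntegral.integral_const_mul, mul_assoc] using htaylor

theorem stmt_11_general (d : ℕ) (p : ℝ) (hp : 2 ≤ p) :
    ∃ K > 0, ∀ y₁ y₂ : EuclideanSpace ℝ (Fin d),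
      ‖y₁ + y₂‖ ^ p - ‖y₁‖ ^ p - p * ‖y₁‖ ^ (p - 2) * (inner ℝ y₁ y₂ : ℝ) ≤
        K * ∫ q in (0:ℝ)..1, ‖y₁ + q • y₂‖ ^ (p - 2) * ‖y₂‖ ^ 2 :=
  ⟨p * (p - 1), by nlinarith, norm_add_rpow_sub_le_integral hp⟩

/-- Taylor remainder estimate for the map `y ↦ ‖y‖^p`, `p ≥ 2`:
`‖y₁+y₂‖^p − ‖y₁‖^p − p‖y₁‖^{p−2}⟨y₁,y₂⟩ ≤ K ∫₀¹ ‖y₁ + q y₂‖^{p−2} ‖y₂‖² dq`. -/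
theorem stmt_11 (d : ℕ) (hd : 1 ≤ d) (p : ℝ) (hp : 2 ≤ p) :
    ∃ K > 0, ∀ y₁ y₂ : EuclideanSpace ℝ (Fin d),
      ‖y₁ + y₂‖ ^ p - ‖y₁‖ ^ p - p * ‖y₁‖ ^ (p - 2) * (inner ℝ y₁ y₂ : ℝ) ≤
        K * ∫ q in (0:ℝ)..1, ‖y₁ + q • y₂‖ ^ (p - 2) * ‖y₂‖ ^ 2 :=
  stmt_11_general d p hp
end
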